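/- arXiv:1912.07119 — 3 statements merged into one kernel-verified Lean document; each statement's English description precedes it below -/
import Mathlib

section
/- Let p be an odd prime, E = ℚ(ζ_p), and let (L,h) be a hermitian ℤ[ζ_p]-lattice (h sesquilinear with respect to complex conjugation, h(y,x) = conj(h(x,y))). If the trace bilinear form b = Tr_{E/ℚ} ∘ h takes integer values on L × L, then b(x,x) ∈ 2ℤ for every x ∈ L, i.e. the trace lattice is even. -/
theorem stmt1 (p : ℕ) (hp : p.Prime) (hodd : p ≠ 2)
    (E : Type*) [Field E] [Algebra ℚ E]
    [IsCyclotomicExtension {p} ℚ E]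
    (ζ : E) (hζ : IsPrimitiveRoot ζ p)
    (σ : E ≃ₐ[ℚ] E) (hσ : σ ζ = ζ⁻¹)
    (V : Type*) [AddCommGroup V] [Module E V]
    (h : V → V → E)
    (hsmul : ∀ (c : E) (x y : V), h (c • x) y = c * h x y)
    (hadd : ∀ x x' y : V, h (x + x') y = h x y + h x' y)
    (hherm : ∀ x y : V, h y x = σ (h x y))
    (hnondeg : ∀ x : V, (∀ y : V, h x y = 0) → x = 0)
    (L : Submodule ℤ V) (hLζ : ∀ x ∈ L, ζ • x ∈ L)
    (hint : ∀ x ∈ L, ∀ y ∈ L, ∃ n : ℤ, Algebra.trace ℚ E (h x y) = n)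
    (x : V) (hx : x ∈ L) :
    ∃ m : ℤ, Algebra.trace ℚ E (h x x) = 2 * m := by
  set α := h x x with hα
  have hσα : σ α = α := (hherm x x).symm
  have hζne : ζ ≠ 0 := hζ.ne_zero hp.pos.ne'
  -- powers of ζ preserve L
  have hpow : ∀ j : ℕ, ζ ^ j • x ∈ L := by
    intro j
    induction j with
    | zero => simpa using hx
    | succ k ih => rw [pow_succ, mul_comm, mul_smul]; exact hLζ _ ih
  -- integrality of traces
  have key : ∀ j : ℕ, ∃ n : ℤ, Algebra.trace ℚ E (ζ ^ j * α) = n := by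
    intro j
    rw [hα, ← hsmul]
    exact hint _ (hpow j) x hx
  choose n hn using key
  -- symmetry n (p - j) = n j for 1 ≤ j ≤ p
  have hsym : ∀ j : ℕ, j ≤ p → n (p - j) = n j := by
    intro j hj
    have hzp : ζ ^ (p - j) = (ζ ^ j)⁻¹ := by
      have : ζ ^ (p - j) * ζ ^ j = 1 := by
        rw [← pow_add, Nat.sub_add_cancel hj, hζ.pow_eq_one]
      field_simp at this ⊢
      linear_combination this
    have htr : Algebra.trace ℚ E (ζ ^ (p - j) * α) = Algebra.trace ℚ E (ζ ^ j * α) := by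
      have : ζ ^ (p - j) * α = σ (ζ ^ j * α) := by
        rw [map_mul, map_pow, hσ, hσα, hzp, inv_pow]
      rw [this, Algebra.trace_eq_of_algEquiv σ]
    have := (hn (p - j)).symm.trans (htr.trans (hn j))
    exact_mod_cast this
  -- total sum is zero
  have hsumz : ∑ j ∈ Finset.range p, (n j : ℚ) = 0 := by
    have : ∑ j ∈ Finset.range p, Algebra.trace ℚ E (ζ ^ j * α) = 0 := by
      rw [← map_sum, ← Finset.sum_mul, hζ.geom_sum_eq_zero hp.one_lt, zero_mul, map_zero]
    simpa [hn] using this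
  have hsumzZ : ∑ j ∈ Finset.range p, n j = 0 := by
    exact_mod_cast (by push_cast; exact hsumz : ((∑ j ∈ Finset.range p, n j : ℤ) : ℚ) = 0)
  -- p = 2k + 1
  obtain ⟨k, hk⟩ := hp.odd_of_ne_two hodd
  -- split the sum
  have hsplit : ∑ j ∈ Finset.range p, n j
      = n 0 + (∑ j ∈ Finset.Ico 1 (k + 1), n j + ∑ j ∈ Finset.Ico (k + 1) p, n j) := by
    rw [Finset.range_eq_Ico, ← Finset.sum_Ico_consecutive _ (by omega : (0:ℕ) ≤ 1) (by omega),
      ← Finset.sum_Ico_consecutive _ (by omega : 1 ≤ k + 1) (by omega : k + 1 ≤ p)]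
    simp
  have hrefl : ∑ j ∈ Finset.Ico (k + 1) p, n j = ∑ j ∈ Finset.Ico 1 (k + 1), n j := by
    rw [Finset.sum_nbij' (i := fun j => p - j) (j := fun j => p - j)]
    · intro a ha; simp only [Finset.mem_Ico] at ha ⊢; omega
    · intro a ha; simp only [Finset.mem_Ico] at ha ⊢; omega
    · intro a ha; simp only [Finset.mem_Ico] at ha; omega
    · intro a ha; simp only [Finset.mem_Ico] at ha; omega
    · intro a ha
      simp only [Finset.mem_Ico] at ha
      exact (hsym a (by omega)).symm
  refine ⟨-∑ j ∈ Finset.Ico 1 (k + 1), n j, ?_⟩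
  have hn0 : Algebra.trace ℚ E α = n 0 := by simpa using hn 0
  rw [hn0]
  have : n 0 = 2 * -∑ j ∈ Finset.Ico 1 (k + 1), n j := by
    rw [hsplit, hrefl] at hsumzZ; omega
  exact_mod_cast congrArg (fun z : ℤ => (z : ℚ)) this
end

section
/- Let L be a unimodular integral ℤ-lattice and S ⊆ L a primitive nondegenerate sublattice with orthogonal complement S^⊥. Then |det(S)| = |det(S^⊥)|. -/
theorem stmt7 (n : ℕ) (G : Matrix (Fin n) (Fin n) ℤ)
    (hsymm : G.IsSymm) (hGdet : G.det = 1 ∨ G.det = -1)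
    (b : (Fin n → ℤ) → (Fin n → ℤ) → ℤ)
    (hb : ∀ x y, b x y = dotProduct x (G.mulVec y))
    (S : Submodule ℤ (Fin n → ℤ))
    (hprim : ∀ (y : Fin n → ℤ) (m : ℤ), m ≠ 0 → m • y ∈ S → y ∈ S)
    (hnondeg : ∀ s ∈ S, (∀ t ∈ S, b s t = 0) → s = 0)
    (Sp : Submodule ℤ (Fin n → ℤ)) (hSp : ∀ y, y ∈ Sp ↔ ∀ s ∈ S, b y s = 0) :
    ∀ (k l : ℕ) (v : Module.Basis (Fin k) ℤ S) (w : Module.Basis (Fin l) ℤ Sp),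
      |Matrix.det (Matrix.of fun i j => b (v i : Fin n → ℤ) (v j : Fin n → ℤ))| =
      |Matrix.det (Matrix.of fun i j => b (w i : Fin n → ℤ) (w j : Fin n → ℤ))| := by
  intro k l v w
  have hGunit : IsUnit G.det := by
    rcases hGdet with h | h <;> simp [h, Int.isUnit_iff]
  haveI : Invertible G := G.invertibleOfIsUnitDet hGunit
  -- symmetry of b
  have hGv : ∀ z, Matrix.vecMul z G = G.mulVec z := by
    intro z
    conv_lhs => rw [← hsymm.eq]
    exact Matrix.vecMul_transpose G z
  have b_symm : ∀ x y, b x y = b y x := by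
    intro x y
    rw [hb, hb, Matrix.dotProduct_mulVec, hGv, dotProduct_comm]
  have b_smul_left : ∀ (c : ℤ) x y, b (c • x) y = c * b x y := by
    intro c x y
    rw [hb, hb, smul_dotProduct, smul_eq_mul]
  have b_add_left : ∀ x x' y, b (x + x') y = b x y + b x' y := by
    intro x x' y
    rw [hb, hb, hb, add_dotProduct]
  have b_sum_left : ∀ {ι : Type} (s : Finset ι) (f : ι → (Fin n → ℤ)) (y : Fin n → ℤ),
      b (∑ i ∈ s, f i) y = ∑ i ∈ s, b (f i) y := by
    intro ι s f y
    classical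
    induction s using Finset.induction_on with
    | empty =>
        simp only [Finset.sum_empty]
        have : b 0 y = b ((0:ℤ) • 0) y := by norm_num
        rw [this, b_smul_left]; ring
    | @insert a s h ih =>
        rw [Finset.sum_insert h, Finset.sum_insert h, b_add_left, ih]
  -- the bilinear-in-first-argument linear map x ↦ (b x (v i))_i
  have key : True := trivial
  let φ : (Fin n → ℤ) →ₗ[ℤ] (Fin k → ℤ) :=
    { toFun := fun x i => b x (v i)
      map_add' := by intro x y; funext i; exact b_add_left x y (v i)
      map_smul' := by intro c x; funext i; exact b_smul_left c x (v i) }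
  have φ_apply : ∀ x i, φ x i = b x (v i) := fun _ _ => rfl
  -- the quotient by S is free, giving a retraction π onto S
  haveI : NoZeroSMulDivisors ℤ ((Fin n → ℤ) ⧸ S) := by
    constructor
    intro c x h
    rcases eq_or_ne c 0 with rfl | hc
    · exact Or.inl rfl
    · right
      obtain ⟨y, rfl⟩ := S.mkQ_surjective x
      have h1 : S.mkQ (c • y) = 0 := by rw [map_smul]; exact h
      have h2 : c • y ∈ S := by
        rwa [Submodule.mkQ_apply, Submodule.Quotient.mk_eq_zero] at h1
      have h3 : y ∈ S := hprim y c hc h2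
      rw [Submodule.mkQ_apply, Submodule.Quotient.mk_eq_zero]
      exact h3
  obtain ⟨sec, hsec⟩ := Module.projective_lifting_property S.mkQ LinearMap.id S.mkQ_surjective
  let π : (Fin n → ℤ) →ₗ[ℤ] (Fin n → ℤ) := LinearMap.id - sec ∘ₗ S.mkQ
  have hπmem : ∀ x, π x ∈ S := by
    intro x
    have : S.mkQ (π x) = 0 := by
      simp only [π, map_sub, LinearMap.sub_apply, LinearMap.id_apply, LinearMap.comp_apply]
      have := congrArg (fun f => f (S.mkQ x)) hsec
      simp only [LinearMap.comp_apply, LinearMap.id_apply] at this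
      rw [this, sub_self]
    rwa [Submodule.mkQ_apply, Submodule.Quotient.mk_eq_zero] at this
  have hπid : ∀ s : (Fin n → ℤ), s ∈ S → π s = s := by
    intro s hs
    have h0 : S.mkQ s = 0 := by rw [Submodule.mkQ_apply, Submodule.Quotient.mk_eq_zero]; exact hs
    simp only [π, LinearMap.sub_apply, LinearMap.id_apply, LinearMap.comp_apply, h0, map_zero,
      sub_zero]
  let πS : (Fin n → ℤ) →ₗ[ℤ] S := LinearMap.codRestrict S π hπmem
  -- realize any linear functional as b(r, ·)
  have hfun : ∀ (g : (Fin n → ℤ) →ₗ[ℤ] ℤ) (y : Fin n → ℤ),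
      b ((G⁻¹).mulVec (fun j => g (Pi.single j 1))) y = g y := by
    intro g y
    set d : Fin n → ℤ := fun j => g (Pi.single j 1) with hd
    have h1 : b ((G⁻¹).mulVec d) y = dotProduct d y := by
      rw [hb, Matrix.dotProduct_mulVec, hGv, Matrix.mulVec_mulVec,
        Matrix.mul_inv_of_invertible, Matrix.one_mulVec]
    rw [h1]
    have h2 : y = ∑ j : Fin n, Pi.single j (y j) := (Finset.univ_sum_single y).symm
    calc dotProduct d y = ∑ j : Fin n, g (Pi.single j 1) * y j := rfl
      _ = ∑ j : Fin n, g (y j • Pi.single j 1) := by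
          refine Finset.sum_congr rfl fun j _ => ?_
          rw [map_smul, smul_eq_mul, mul_comm]
      _ = g (∑ j : Fin n, y j • Pi.single j 1) := (map_sum g _ _).symm
      _ = g y := by
          congr 1
          refine Eq.trans ?_ (Finset.univ_sum_single y)
          refine Finset.sum_congr rfl fun j _ => ?_
          ext a
          by_cases hja : j = a <;> simp [hja, Pi.single_apply]
  -- the dual family r with b (r i) (v j) = δᵢⱼ
  let r : Fin k → (Fin n → ℤ) := fun i =>
    (G⁻¹).mulVec (fun j => ((v.coord i) ∘ₗ πS) (Pi.single j 1))
  have hr : ∀ i j, b (r i) ((v j : Fin n → ℤ)) = if j = i then 1 else 0 := by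
    intro i j
    have h1 := hfun ((v.coord i) ∘ₗ πS) (v j : Fin n → ℤ)
    rw [h1]
    have h2 : πS (v j : Fin n → ℤ) = v j := by
      apply Subtype.ext
      exact hπid _ (v j).2
    simp only [LinearMap.comp_apply, h2, Module.Basis.coord_apply, Module.Basis.repr_self]
    exact Finsupp.single_apply
  -- kernel of φ is Sp
  have hker : ∀ x, x ∈ Sp ↔ φ x = 0 := by
    intro x
    constructor
    · intro hx
      funext i
      exact (hSp x).1 hx _ (v i).2
    · intro hx
      rw [hSp]
      intro s hs
      have hrep : (⟨s, hs⟩ : S) = ∑ i : Fin k, v.repr ⟨s, hs⟩ i • v i := (v.sum_repr _).symm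
      have hrep2 : s = ∑ i : Fin k, v.repr ⟨s, hs⟩ i • (v i : Fin n → ℤ) := by
        have := congrArg (Subtype.val) hrep
        simp only [Submodule.coe_sum, Submodule.coe_smul] at this
        exact this
      rw [b_symm, hrep2, b_sum_left]
      refine Finset.sum_eq_zero fun i _ => ?_
      rw [b_smul_left, b_symm]
      have : b x (v i) = 0 := by rw [← φ_apply, hx]; rfl
      rw [this, mul_zero]
  -- R section
  let R : (Fin k → ℤ) →ₗ[ℤ] (Fin n → ℤ) := (Pi.basisFun ℤ (Fin k)).constr ℤ r
  have hRbasis : ∀ i, R (Pi.single i 1) = r i := by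
    intro i
    have := (Pi.basisFun ℤ (Fin k)).constr_basis ℤ r i
    rwa [Pi.basisFun_apply] at this
  have hφR : ∀ a, φ (R a) = a := by
    have : φ ∘ₗ R = LinearMap.id := by
      apply (Pi.basisFun ℤ (Fin k)).ext
      intro i
      rw [LinearMap.comp_apply, LinearMap.id_apply, Pi.basisFun_apply, hRbasis]
      funext j
      rw [φ_apply, hr]
      simp [Pi.single_apply]
    intro a
    have := congrArg (fun f => f a) this
    simpa using this
  -- the equivalence (Fin k → ℤ) × Sp ≃ ℤⁿ
  let L1 : ((Fin k → ℤ) × Sp) →ₗ[ℤ] (Fin n → ℤ) :=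
    R ∘ₗ LinearMap.fst ℤ _ _ + Sp.subtype ∘ₗ LinearMap.snd ℤ _ _
  have hL1 : ∀ a (s : Sp), L1 (a, s) = R a + (s : Fin n → ℤ) := fun _ _ => rfl
  have hφSp : ∀ s : Sp, φ (s : Fin n → ℤ) = 0 := fun s => (hker _).1 s.2
  have hL1bij : Function.Bijective L1 := by
    constructor
    · intro p q hpq
      obtain ⟨a, s⟩ := p; obtain ⟨a', s'⟩ := q
      rw [hL1, hL1] at hpq
      have h1 : a = a' := by
        have := congrArg φ hpq
        rw [map_add, map_add, hφSp, hφSp, add_zero, add_zero, hφR, hφR] at this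
        exact this
      subst h1
      have h2 : (s : Fin n → ℤ) = s' := by
        have := add_left_cancel hpq
        exact this
      exact Prod.ext rfl (Subtype.ext h2)
    · intro x
      have hmem : x - R (φ x) ∈ Sp := by
        rw [hker, map_sub, hφR, sub_self]
      exact ⟨(φ x, ⟨x - R (φ x), hmem⟩), by rw [hL1]; ring⟩
  let E : ((Fin k → ℤ) × Sp) ≃ₗ[ℤ] (Fin n → ℤ) := LinearEquiv.ofBijective L1 hL1bij
  -- k + l = n
  haveI : Module.Finite ℤ Sp := Module.Finite.of_basis w
  haveI : Module.Free ℤ Sp := Module.Free.of_basis w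
  have hkl : k + l = n := by
    have h1 : Module.finrank ℤ ((Fin k → ℤ) × Sp) = Module.finrank ℤ (Fin n → ℤ) :=
      E.finrank_eq
    rw [Module.finrank_prod, Module.finrank_eq_card_basis w] at h1
    simpa using h1
  -- the adapted basis B of ℤⁿ
  let B : Module.Basis (Fin k ⊕ Fin l) ℤ (Fin n → ℤ) := ((Pi.basisFun ℤ (Fin k)).prod w).map E
  have hBl : ∀ i, B (Sum.inl i) = r i := by
    intro i
    have h1 : ((Pi.basisFun ℤ (Fin k)).prod w) (Sum.inl i) = (Pi.single i 1, (0 : Sp)) := by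
      ext1
      · rw [Module.Basis.prod_apply_inl_fst, Pi.basisFun_apply]
      · rw [Module.Basis.prod_apply_inl_snd]
    rw [Module.Basis.map_apply, h1]
    show L1 (Pi.single i 1, (0 : Sp)) = r i
    rw [hL1, hRbasis]
    simp
  have hBr : ∀ j, B (Sum.inr j) = (w j : Fin n → ℤ) := by
    intro j
    have h1 : ((Pi.basisFun ℤ (Fin k)).prod w) (Sum.inr j) = ((0 : Fin k → ℤ), w j) := by
      ext1
      · rw [Module.Basis.prod_apply_inr_fst]
      · rw [Module.Basis.prod_apply_inr_snd]
    rw [Module.Basis.map_apply, h1]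
    show L1 (0, w j) = (w j : Fin n → ℤ)
    rw [hL1, map_zero, zero_add]
  -- the combined family P and coordinate matrix T
  let P : Fin k ⊕ Fin l → (Fin n → ℤ) :=
    Sum.elim (fun i => (v i : Fin n → ℤ)) (fun j => (w j : Fin n → ℤ))
  let T : Matrix (Fin k ⊕ Fin l) (Fin k ⊕ Fin l) ℤ := Matrix.of fun p q => B.repr (P q) p
  set A : Matrix (Fin k) (Fin k) ℤ :=
    Matrix.of fun i j => b (v i : Fin n → ℤ) (v j : Fin n → ℤ) with hAdef
  set C : Matrix (Fin l) (Fin l) ℤ :=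
    Matrix.of fun i j => b (w i : Fin n → ℤ) (w j : Fin n → ℤ) with hCdef
  -- expansion of b in terms of the basis B
  have hexp : ∀ x y, b x y = ∑ p : Fin k ⊕ Fin l, B.repr x p * b (B p) y := by
    intro x y
    conv_lhs => rw [← B.sum_repr x]
    rw [b_sum_left]
    exact Finset.sum_congr rfl fun p _ => b_smul_left _ _ _
  -- values against basis vectors
  have hBlv : ∀ i q, b (B (Sum.inl i)) ((v q : Fin n → ℤ)) = if q = i then 1 else 0 := by
    intro i q; rw [hBl]; exact hr i q
  have hBrS : ∀ j (s : Fin n → ℤ), s ∈ S → b (B (Sum.inr j)) s = 0 := by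
    intro j s hs
    rw [hBr]
    exact (hSp _).1 (w j).2 s hs
  -- Gram matrices
  let GBB : Matrix (Fin k ⊕ Fin l) (Fin k ⊕ Fin l) ℤ := Matrix.of fun p q => b (B p) (B q)
  let GPB : Matrix (Fin k ⊕ Fin l) (Fin k ⊕ Fin l) ℤ := Matrix.of fun q p => b (P q) (B p)
  have hTG : T.transpose * GBB = GPB := by
    ext q p'
    rw [Matrix.mul_apply]
    exact (hexp (P q) (B p')).symm
  have hGPB : GPB = Matrix.fromBlocks 1 0
      (Matrix.of fun i j => b (w i : Fin n → ℤ) (r j)) C := by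
    ext q p
    rcases q with i | i <;> rcases p with j | j
    · show b (v i : Fin n → ℤ) (B (Sum.inl j)) = (1 : Matrix (Fin k) (Fin k) ℤ) i j
      rw [b_symm, hBlv]
      by_cases h : i = j
      · subst h; simp [Matrix.one_apply]
      · rw [if_neg h, Matrix.one_apply_ne h]
    · show b (v i : Fin n → ℤ) (B (Sum.inr j)) = 0
      rw [b_symm]
      exact hBrS j _ (v i).2
    · show b (w i : Fin n → ℤ) (B (Sum.inl j)) = b (w i : Fin n → ℤ) (r j)
      rw [hBl]
    · show b (w i : Fin n → ℤ) (B (Sum.inr j)) = C i j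
      rw [hBr]; rfl
  -- T is block triangular with A in the corner
  have hTblock : T = Matrix.fromBlocks A 0
      (Matrix.of fun i j => B.repr ((v j : Fin n → ℤ)) (Sum.inr i)) 1 := by
    ext p q
    rcases p with i | i <;> rcases q with j | j
    · show B.repr ((v j : Fin n → ℤ)) (Sum.inl i) = b (v i : Fin n → ℤ) (v j : Fin n → ℤ)
      rw [b_symm, hexp (v j : Fin n → ℤ) (v i : Fin n → ℤ)]
      rw [Fintype.sum_sum_type]
      have h2 : ∀ p : Fin l, B.repr ((v j : Fin n → ℤ)) (Sum.inr p) *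
          b (B (Sum.inr p)) ((v i : Fin n → ℤ)) = 0 := by
        intro p
        rw [hBrS p _ (v i).2, mul_zero]
      rw [Finset.sum_congr rfl (fun p _ => by rw [hBlv]), Finset.sum_eq_zero (fun p _ => h2 p),
        add_zero]
      simp
    · show B.repr ((w j : Fin n → ℤ)) (Sum.inl i) = 0
      rw [← hBr j, B.repr_self]
      simp [Finsupp.single_apply]
    · rfl
    · show B.repr ((w j : Fin n → ℤ)) (Sum.inr i) = (1 : Matrix (Fin l) (Fin l) ℤ) i j
      rw [← hBr j, B.repr_self, Matrix.one_apply]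
      simp [Finsupp.single_apply, eq_comm]
  have hdetT : T.det = A.det := by
    rw [hTblock, Matrix.det_fromBlocks_zero₁₂, Matrix.det_one, mul_one]
  -- det GBB is a unit
  let e : (Fin k ⊕ Fin l) ≃ Fin n := finSumFinEquiv.trans (finCongr hkl)
  let B' : Module.Basis (Fin n) ℤ (Fin n → ℤ) := B.reindex e
  let Smat : Matrix (Fin n) (Fin n) ℤ := (Pi.basisFun ℤ (Fin n)).toMatrix B'
  have hSmat : ∀ (a : Fin n) p, Smat a (e p) = B p a := by
    intro a p
    show (Pi.basisFun ℤ (Fin n)).toMatrix (⇑B') a (e p) = B p a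
    rw [Module.Basis.toMatrix_apply, Pi.basisFun_repr, Module.Basis.reindex_apply, Equiv.symm_apply_apply]
  have hGBB : GBB = (Smat.transpose * (G * Smat)).submatrix e e := by
    ext p q
    show b (B p) (B q) = (Smat.transpose * (G * Smat)) (e p) (e q)
    rw [hb, Matrix.mul_apply']
    congr 1
    · funext a
      rw [Matrix.transpose_apply, hSmat]
    · funext a
      rw [Matrix.mul_apply]
      simp only [Matrix.mulVec, dotProduct]
      exact Finset.sum_congr rfl fun c _ => by rw [hSmat]
  haveI : Invertible Smat := (Pi.basisFun ℤ (Fin n)).invertibleToMatrix B'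
  have hdUnit : IsUnit GBB.det := by
    rw [hGBB, Matrix.det_submatrix_equiv_self, Matrix.det_mul, Matrix.det_mul,
      Matrix.det_transpose]
    exact Smat.isUnit_det_of_invertible.mul (hGunit.mul Smat.isUnit_det_of_invertible)
  have habs_d : |GBB.det| = 1 := by
    rcases Int.isUnit_iff.1 hdUnit with h | h <;> rw [h] <;> rfl
  -- put everything together
  have hdetGPB : GPB.det = C.det := by
    rw [hGPB, Matrix.det_fromBlocks_zero₁₂, Matrix.det_one, one_mul]
  have hmain : T.det * GBB.det = C.det := by
    rw [← hdetGPB, ← hTG, Matrix.det_mul, Matrix.det_transpose]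
  calc |A.det| = |T.det| := by rw [hdetT]
    _ = |T.det| * |GBB.det| := by rw [habs_d, mul_one]
    _ = |T.det * GBB.det| := (abs_mul _ _).symm
    _ = |C.det| := by rw [hmain]
end

section
/- Let L be a nondegenerate integral ℤ-lattice, x ∈ L a primitive vector with k = b(x,x) ≠ 0, and h = [L : ℤx ⊕ x^⊥]. Then the ideal b(x, L) ⊆ ℤ is generated by k/h; in particular the divisibility of x, defined as the positive generator of b(x,L), equals |k|/h. -/
theorem aux16 {L : Type*} [AddCommGroup L] [Module ℤ L] (φ : L →ₗ[ℤ] ℤ) (x : L)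
    (hk : φ x ≠ 0) :
    (Submodule.span ℤ {x} ⊔ LinearMap.ker φ).toAddSubgroup.index ≠ 0 ∧
    ∃ q : ℤ, φ x = q * ((Submodule.span ℤ {x} ⊔ LinearMap.ker φ).toAddSubgroup.index : ℤ) ∧
      LinearMap.range φ = Ideal.span {q} := by
  obtain ⟨d, hd⟩ := (IsPrincipalIdealRing.principal (LinearMap.range φ : Ideal ℤ)).principal
  have hdvd : ∀ y : L, d ∣ φ y := by
    intro y
    have : φ y ∈ LinearMap.range φ := ⟨y, rfl⟩
    rw [hd] at this
    rwa [Ideal.submodule_span_eq, Ideal.mem_span_singleton] at this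
  have hdk : d ∣ φ x := hdvd x
  have hd0 : d ≠ 0 := by rintro rfl; exact hk (zero_dvd_iff.mp hdk)
  set e : ℤ := φ x / d with he
  have hde : d * e = φ x := Int.mul_ediv_cancel' hdk
  have he0 : e ≠ 0 := by rintro h; rw [h, mul_zero] at hde; exact hk hde.symm
  obtain ⟨y₀, hy₀⟩ : d ∈ LinearMap.range φ := by
    rw [hd, Ideal.submodule_span_eq]; exact Ideal.mem_span_singleton_self d
  have hψadd : ∀ y z : L, φ (y + z) / d = φ y / d + φ z / d := by
    intro y z
    rw [map_add, Int.add_ediv_of_dvd_left (hdvd y)]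
  set ψ : L →+ ℤ := AddMonoidHom.mk' (fun y => φ y / d) hψadd with hψ
  have hψsurj : Function.Surjective ψ := by
    intro m
    refine ⟨m • y₀, ?_⟩
    simp only [hψ, AddMonoidHom.mk'_apply, map_zsmul, zsmul_eq_mul, Int.cast_id, hy₀]
    rw [Int.ediv_self hd0, mul_one]
  have hcomap : (Submodule.span ℤ {x} ⊔ LinearMap.ker φ).toAddSubgroup
      = AddSubgroup.comap ψ (AddSubgroup.zmultiples e) := by
    ext y
    simp only [Submodule.mem_toAddSubgroup, AddSubgroup.mem_comap,
      AddSubgroup.mem_zmultiples_iff, hψ, AddMonoidHom.mk'_apply]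
    constructor
    · intro hy
      obtain ⟨a, ha, c, hc, rfl⟩ := Submodule.mem_sup.mp hy
      obtain ⟨m, rfl⟩ := Submodule.mem_span_singleton.mp ha
      refine ⟨m, ?_⟩
      have hc0 : φ c = 0 := LinearMap.mem_ker.mp hc
      rw [zsmul_eq_mul, map_add, hc0, add_zero, LinearMap.map_smul, smul_eq_mul, he,
        Int.mul_ediv_assoc m hdk, Int.cast_id]
    · rintro ⟨m, hm⟩
      rw [zsmul_eq_mul, Int.cast_id] at hm
      obtain ⟨a, ha, hφa'⟩ : ∃ a ∈ Submodule.span ℤ {x}, φ a = m * φ x := by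
        refine ⟨_, Submodule.smul_mem _ m (Submodule.mem_span_singleton_self x), ?_⟩
        rw [LinearMap.map_smul, smul_eq_mul]
      have hsub : y - a ∈ LinearMap.ker φ := by
        rw [LinearMap.mem_ker, map_sub, hφa', sub_eq_zero]
        have h1 : φ y = d * (φ y / d) := (Int.mul_ediv_cancel' (hdvd y)).symm
        rw [h1, ← hm, ← hde]; ring
      exact Submodule.mem_sup.mpr ⟨a, ha, y - a, hsub, by abel⟩
  have hindex : (Submodule.span ℤ {x} ⊔ LinearMap.ker φ).toAddSubgroup.index = e.natAbs := by
    rw [hcomap, AddSubgroup.index_comap_of_surjective _ hψsurj, Int.index_zmultiples]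
  constructor
  · rw [hindex]; simpa using he0
  · have hu : IsUnit e.sign := Int.isUnit_iff.mpr <| by
      rcases he0.lt_or_gt with h | h
      · exact Or.inr (Int.sign_eq_neg_one_of_neg h)
      · exact Or.inl (Int.sign_eq_one_of_pos h)
    refine ⟨d * e.sign, ?_, ?_⟩
    · rw [hindex, mul_assoc, Int.sign_mul_natAbs, hde]
    · rw [hd, Ideal.submodule_span_eq]
      exact Ideal.span_singleton_eq_span_singleton.mpr (associated_mul_unit_right d e.sign hu)

theorem stmt16 (n : ℕ) (G : Matrix (Fin n) (Fin n) ℤ)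
    (hsymm : G.IsSymm) (hGdet : G.det ≠ 0)
    (b : (Fin n → ℤ) → (Fin n → ℤ) → ℤ)
    (hb : ∀ x y, b x y = dotProduct x (G.mulVec y))
    (x : Fin n → ℤ)
    (hprim : ∀ (m : ℤ) (y : Fin n → ℤ), x = m • y → IsUnit m)
    (hxx : b x x ≠ 0)
    (C : Submodule ℤ (Fin n → ℤ)) (hC : ∀ y, y ∈ C ↔ b x y = 0) :
    (Submodule.span ℤ {x} ⊔ C).toAddSubgroup.index ≠ 0 ∧
    ∃ q : ℤ, b x x = q * ((Submodule.span ℤ {x} ⊔ C).toAddSubgroup.index : ℤ) ∧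
      Submodule.span ℤ (Set.range fun y => b x y) = Ideal.span {q} := by
  set φ : (Fin n → ℤ) →ₗ[ℤ] ℤ :=
    { toFun := fun y => b x y
      map_add' := by intro y z; simp [hb, Matrix.mulVec_add, dotProduct_add]
      map_smul' := by
        intro m y
        simp only [hb, Matrix.mulVec_smul, dotProduct_smul, smul_eq_mul,
          RingHom.id_apply] } with hφ
  have hφa : ∀ y, φ y = b x y := fun y => rfl
  have hker : C = LinearMap.ker φ := by
    ext y; rw [LinearMap.mem_ker, hφa, hC]
  have hrange : Submodule.span ℤ (Set.range fun y => b x y) = LinearMap.range φ := by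
    apply le_antisymm
    · rw [Submodule.span_le]; rintro _ ⟨y, rfl⟩; exact ⟨y, rfl⟩
    · rintro _ ⟨y, rfl⟩; exact Submodule.subset_span ⟨y, rfl⟩
  rw [hker, hrange]
  exact aux16 φ x (by rw [hφa]; exact hxx)
end
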